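/- arXiv:2004.04937 — 5 statements merged into one kernel-verified Lean document; each statement's English description precedes it below -/
import Mathlib

section
/- Let V be a finite-dimensional vector space over a finite field F_q and let α, β be functions from subspaces of V to a field with β(W) = Σ_{U ⊆ W} α(U) for all subspaces W. Then for all subspaces W ⊆ Y of V, Σ_{T : W ⊆ T ⊆ Y} (-1)^(dim Y - dim T) q^((dim Y - dim T)(dim Y - dim T - 1)/2) β(T) = Σ_{U : U + W = Y} α(U), where the right-hand sum is over all subspaces U of V whose span together with W is Y. -/
/-!
Exchanging the two sums reduces the identity to the Möbius function of the lattice of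
subspaces: with `μ(k) = (-1)^k q^(k(k-1)/2)`, the sum of `μ(dim Y - dim T)` over `X ≤ T ≤ Y`
vanishes for `X < Y`. To see this, choose a hyperplane `H` of `Y` containing `X` and group the
`T` by `S = T ⊓ H`. Besides `S` itself, the fibre over `S` consists of the subspaces `T ≤ Y`
with `T ⊓ H = S` and `T ≰ H`; each has dimension `dim S + 1`, and there are `q^(dim H - dim S)`
of them, because `v ↦ S + 𝔽v` maps `Y \ H` onto them with fibres `T \ S`. So the fibre
contributes `μ(k + 1) + q^k μ(k) = 0`, where `k = dim H - dim S`.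
-/

open scoped Classical

open Module Finset

section Lattice

variable {L : Type*} [Lattice L]

theorem CovBy.inf_covBy_of_le_of_not_le [IsLowerModularLattice L] {a b c : L} (hbc : b ⋖ c)
    (hac : a ≤ c) (hab : ¬a ≤ b) : a ⊓ b ⋖ a := by
  have hsup : a ⊔ b = c :=
    (hbc.eq_or_eq le_sup_right (sup_le hac hbc.le)).resolve_left fun h => hab (h ▸ le_sup_left)
  exact inf_covBy_of_covBy_sup_right (hsup ▸ hbc)

variable [Fintype L]

theorem filter_inf_eq_eq_insert [DecidableEq L] {X S H Y : L} (hXS : X ≤ S) (hSH : S ≤ H) (hHY : H ≤ Y) :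
    (univ.filter fun T => X ≤ T ∧ T ≤ Y).filter (fun T => T ⊓ H = S)
      = insert S (univ.filter fun T => T ≤ Y ∧ ¬T ≤ H ∧ T ⊓ H = S) := by
  ext T
  simp only [mem_filter, mem_univ, true_and, mem_insert]
  constructor
  · rintro ⟨⟨-, hTY⟩, rfl⟩
    by_cases hTH : T ≤ H
    · exact Or.inl (inf_eq_left.2 hTH).symm
    · exact Or.inr ⟨hTY, hTH, rfl⟩
  · rintro (rfl | ⟨hTY, -, rfl⟩)
    · exact ⟨⟨hXS, hSH.trans hHY⟩, inf_eq_left.2 hSH⟩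
    · exact ⟨⟨hXS.trans inf_le_left, hTY⟩, rfl⟩

theorem sum_mul_sum_le_eq_sum_sup_eq {R : Type*} [Semiring R] (μ : L → R) (Y : L)
    (hμ : ∀ X, ∑ T ∈ univ.filter (fun T => X ≤ T ∧ T ≤ Y), μ T = if X = Y then 1 else 0)
    (f : L → R) (W : L) :
    ∑ T ∈ univ.filter (fun T => W ≤ T ∧ T ≤ Y), μ T * ∑ U ∈ univ.filter (· ≤ T), f U
      = ∑ U ∈ univ.filter (fun U => U ⊔ W = Y), f U := by
  calc _ = ∑ T ∈ univ.filter (fun T => W ≤ T ∧ T ≤ Y), ∑ U ∈ univ.filter (· ≤ T), μ T * f U := by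
        simp_rw [mul_sum]
    _ = ∑ U, ∑ T ∈ univ.filter (fun T => U ⊔ W ≤ T ∧ T ≤ Y), μ T * f U :=
        sum_comm' fun T U => by simp only [mem_filter, mem_univ, true_and, sup_le_iff]; tauto
    _ = ∑ U, (if U ⊔ W = Y then 1 else 0) * f U := by simp_rw [← sum_mul, hμ]
    _ = _ := by simp_rw [boole_mul, sum_filter]

end Lattice

def qMoebius (R : Type*) [Ring R] (q k : ℕ) : R := (-1) ^ k * (q : R) ^ (k * (k - 1) / 2)

theorem qMoebius_succ (R : Type*) [CommRing R] (q k : ℕ) :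
    qMoebius R q (k + 1) = -((q : R) ^ k * qMoebius R q k) := by
  rw [qMoebius, qMoebius, Nat.triangle_succ, pow_add, pow_succ]
  ring

namespace Submodule

variable {𝔽 V : Type*} [Field 𝔽] [AddCommGroup V] [Module 𝔽 V] [FiniteDimensional 𝔽 V]

theorem finrank_eq_add_one_of_covBy {p r : Submodule 𝔽 V} (h : p ⋖ r) :
    finrank 𝔽 r = finrank 𝔽 p + 1 := by
  obtain ⟨v, hvr, hvp⟩ := SetLike.exists_of_lt h.lt
  have hcov := covBy_span_singleton_sup hvp
  have hr : 𝔽 ∙ v ⊔ p = r :=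
    (h.eq_or_eq hcov.le (sup_le ((span_singleton_le_iff_mem v r).2 hvr) h.le)).resolve_left
      hcov.ne'
  rw [← hr, sup_comm, finrank_sup_span_singleton hvp]

variable [Fintype 𝔽]

theorem card_filter_mem_and_notMem_of_covBy [Fintype V] {p r : Submodule 𝔽 V} (h : p ⋖ r) :
    #(univ.filter fun v => v ∈ r ∧ v ∉ p)
      = Fintype.card 𝔽 ^ finrank 𝔽 p * (Fintype.card 𝔽 - 1) := by
  have hcard (s : Submodule 𝔽 V) : #(univ.filter (· ∈ s)) = Fintype.card 𝔽 ^ finrank 𝔽 s := by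
    rw [← Fintype.card_subtype, ← Module.card_eq_pow_finrank]
  have hpr : univ.filter (· ∈ p) ⊆ univ.filter (· ∈ r) := fun v => by simpa using fun hv => h.le hv
  rw [filter_and_not, card_sdiff_of_subset hpr, hcard,
    hcard, finrank_eq_add_one_of_covBy h, pow_succ, Nat.mul_sub_one]

theorem card_filter_inf_eq_of_covBy [Fintype (Submodule 𝔽 V)] {S H Y : Submodule 𝔽 V}
    (hHY : H ⋖ Y) (hSH : S ≤ H) :
    #(univ.filter fun T : Submodule 𝔽 V => T ≤ Y ∧ ¬T ≤ H ∧ T ⊓ H = S)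
      = Fintype.card 𝔽 ^ (finrank 𝔽 H - finrank 𝔽 S) := by
  have : Finite V := Module.finite_of_finite 𝔽
  have := Fintype.ofFinite V
  set q := Fintype.card 𝔽
  set Ts := univ.filter fun T : Submodule 𝔽 V => T ≤ Y ∧ ¬T ≤ H ∧ T ⊓ H = S
  have hmaps : ∀ v ∈ univ.filter (fun v => v ∈ Y ∧ v ∉ H), 𝔽 ∙ v ⊔ S ∈ Ts := by
    simp only [Ts, mem_filter, mem_univ, true_and]
    rintro v ⟨hvY, hvH⟩
    refine ⟨sup_le ((span_singleton_le_iff_mem v Y).2 hvY) (hSH.trans hHY.le),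
      fun h => hvH (h (mem_sup_left (mem_span_singleton_self v))), ?_⟩
    rw [sup_comm, sup_inf_assoc_of_le _ hSH,
      (disjoint_span_singleton_of_notMem hvH).symm.eq_bot, sup_bot_eq]
  have hfiber : ∀ T ∈ Ts, #((univ.filter fun v => v ∈ Y ∧ v ∉ H).filter
      fun v => 𝔽 ∙ v ⊔ S = T) = q ^ finrank 𝔽 S * (q - 1) := by
    intro T hT
    obtain ⟨hTY, hTH, hTS⟩ : T ≤ Y ∧ ¬T ≤ H ∧ T ⊓ H = S := by simpa [Ts] using hT
    have hST : S ⋖ T := hTS ▸ hHY.inf_covBy_of_le_of_not_le hTY hTH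
    rw [← card_filter_mem_and_notMem_of_covBy hST, filter_filter]
    congr 1
    ext v
    simp only [mem_filter, mem_univ, true_and]
    constructor
    · rintro ⟨⟨-, hvH⟩, rfl⟩
      exact ⟨mem_sup_left (mem_span_singleton_self v), fun hvS => hvH (hSH hvS)⟩
    · rintro ⟨hvT, hvS⟩
      have hcov := covBy_span_singleton_sup hvS
      refine ⟨⟨hTY hvT, fun hvH => hvS (hTS ▸ mem_inf.2 ⟨hvT, hvH⟩)⟩, ?_⟩
      exact (hST.eq_or_eq hcov.le (sup_le ((span_singleton_le_iff_mem v T).2 hvT) hST.le)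
        ).resolve_left hcov.ne'
  have hsplit := card_eq_sum_card_fiberwise hmaps
  rw [card_filter_mem_and_notMem_of_covBy hHY, sum_congr rfl hfiber, sum_const,
    smul_eq_mul] at hsplit
  have hpos : 0 < q ^ finrank 𝔽 S * (q - 1) :=
    Nat.mul_pos (pow_pos Fintype.card_pos _) (Nat.sub_pos_of_lt Fintype.one_lt_card)
  refine Nat.eq_of_mul_eq_mul_right hpos ?_
  rw [← hsplit, ← mul_assoc, ← pow_add, Nat.sub_add_cancel (finrank_mono hSH)]

variable [Fintype (Submodule 𝔽 V)] (R : Type*) [CommRing R]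

theorem sum_qMoebius_eq_zero_of_lt {X Y : Submodule 𝔽 V} (hXY : X < Y) :
    ∑ T ∈ univ.filter (fun T => X ≤ T ∧ T ≤ Y),
      qMoebius R (Fintype.card 𝔽) (finrank 𝔽 Y - finrank 𝔽 T) = 0 := by
  obtain ⟨H, hXH, hHY⟩ := exists_le_covBy_of_lt hXY
  have hY := finrank_eq_add_one_of_covBy hHY
  have hmaps : ∀ T ∈ univ.filter (fun T => X ≤ T ∧ T ≤ Y),
      T ⊓ H ∈ univ.filter (fun S => X ≤ S ∧ S ≤ H) := by
    simp only [mem_filter, mem_univ, true_and]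
    exact fun T hT => ⟨le_inf hT.1 hXH, inf_le_right⟩
  rw [← sum_fiberwise_of_maps_to hmaps]
  refine sum_eq_zero fun S hS => ?_
  obtain ⟨hXS, hSH⟩ : X ≤ S ∧ S ≤ H := by simpa using hS
  have hSH' := finrank_mono hSH
  have hcodim : ∀ T ∈ univ.filter (fun T : Submodule 𝔽 V => T ≤ Y ∧ ¬T ≤ H ∧ T ⊓ H = S),
      finrank 𝔽 Y - finrank 𝔽 T = finrank 𝔽 H - finrank 𝔽 S := by
    intro T hT
    obtain ⟨hTY, hTH, rfl⟩ : T ≤ Y ∧ ¬T ≤ H ∧ T ⊓ H = S := by simpa using hT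
    have := finrank_eq_add_one_of_covBy (hHY.inf_covBy_of_le_of_not_le hTY hTH)
    omega
  rw [filter_inf_eq_eq_insert hXS hSH hHY.le, sum_insert (by simp [hSH]),
    sum_congr rfl fun T hT => by rw [hcodim T hT], sum_const, card_filter_inf_eq_of_covBy hHY hSH,
    nsmul_eq_mul, show finrank 𝔽 Y - finrank 𝔽 S = finrank 𝔽 H - finrank 𝔽 S + 1 by omega,
    qMoebius_succ]
  push_cast
  ring

theorem sum_qMoebius (X Y : Submodule 𝔽 V) :
    ∑ T ∈ univ.filter (fun T => X ≤ T ∧ T ≤ Y),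
      qMoebius R (Fintype.card 𝔽) (finrank 𝔽 Y - finrank 𝔽 T) = if X = Y then 1 else 0 := by
  split_ifs with hXY
  · subst hXY
    have hX : univ.filter (fun T => X ≤ T ∧ T ≤ X) = {X} := by
      ext T
      simp [← le_antisymm_iff, eq_comm]
    simp [hX, qMoebius]
  by_cases hle : X ≤ Y
  · exact sum_qMoebius_eq_zero_of_lt R (lt_of_le_of_ne hle hXY)
  · refine sum_eq_zero fun T hT => (hle ?_).elim
    obtain ⟨hXT, hTY⟩ := (mem_filter.1 hT).2
    exact hXT.trans hTY

end Submodule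

theorem moebius_inversion_interval
    {𝔽 V K : Type*} [Field 𝔽] [Fintype 𝔽] [Field K]
    [AddCommGroup V] [Module 𝔽 V] [FiniteDimensional 𝔽 V]
    [Fintype (Submodule 𝔽 V)]
    (q : ℕ) (hq : Fintype.card 𝔽 = q)
    (α β : Submodule 𝔽 V → K)
    (hβ : ∀ W : Submodule 𝔽 V,
      β W = ∑ U ∈ Finset.univ.filter (fun U : Submodule 𝔽 V => U ≤ W), α U) :
    ∀ W Y : Submodule 𝔽 V, W ≤ Y →
      (∑ T ∈ Finset.univ.filter (fun T : Submodule 𝔽 V => W ≤ T ∧ T ≤ Y),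
        (-1 : K) ^ (Module.finrank 𝔽 Y - Module.finrank 𝔽 T)
          * (q : K) ^ ((Module.finrank 𝔽 Y - Module.finrank 𝔽 T)
              * (Module.finrank 𝔽 Y - Module.finrank 𝔽 T - 1) / 2)
          * β T)
      = ∑ U ∈ Finset.univ.filter (fun U : Submodule 𝔽 V => U ⊔ W = Y), α U := by
  intro W Y _
  subst hq
  simp only [hβ]
  exact sum_mul_sum_le_eq_sum_sup_eq _ Y (Submodule.sum_qMoebius K · Y) α W
end

section
/- Let V be an n-dimensional vector space over a finite field F_q, and let α, β be functions from subspaces of V to a field with β the zeta transform of α (i.e., β(W) = Σ_{U ⊆ W} α(U)). Let g be a nonnegative integer. Then the following are equivalent: (i) α(U) = 0 for every subspace U with dim(U) ≥ g; (ii) for all subspaces W ⊆ Y with dim(Y) - dim(W) ≥ g, Σ_{T : W ⊆ T ⊆ Y} (-1)^(dim Y - dim T) q^((dim Y - dim T)(dim Y - dim T - 1)/2) β(T) = 0. -/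
/-!
Counting the linear maps `M → 𝔽ᵈ` that vanish on `W` according to their kernel gives, for every
`d`, `∑_{T ≥ W} ∏_{i < dim M - dim T} (qᵈ - qⁱ) = (qᵈ)^(dim M - dim W)`. Both sides are
polynomials in `x = qᵈ`, so the identity holds at `x = 0`, where it says that
`(-1)ᵏ q^(k(k-1)/2)` with `k = dim Y - dim T` is the Möbius function `μ(T, Y)` of the lattice
of subspaces. Möbius inversion then turns the interval sum over `[W, Y]` into
`∑_{W ⊔ U = Y} α(U)`, and every such `U` has `dim U ≥ dim Y - dim W`.
-/

open Module Finset Function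

open scoped Classical

theorem LinearMap.injective_iff_linearIndependent_comp_basis {R M N ι : Type*} [CommRing R]
    [AddCommGroup M] [Module R M] [AddCommGroup N] [Module R N] (b : Basis ι R M)
    (f : M →ₗ[R] N) : Injective f ↔ LinearIndependent R (f ∘ b) := by
  refine ⟨fun hf => b.linearIndependent.map' f (ker_eq_bot.2 hf), fun h => ?_⟩
  rw [← b.constr_self R f]
  exact b.injective_constr_of_linearIndependent h

def Submodule.liftQEquiv {R M N : Type*} [Ring R] [AddCommGroup M] [Module R M]
    [AddCommGroup N] [Module R N] (W : Submodule R M) :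
    {f : M →ₗ[R] N // W ≤ LinearMap.ker f} ≃ (M ⧸ W →ₗ[R] N) where
  toFun f := W.liftQ f f.2
  invFun g := ⟨g ∘ₗ W.mkQ, fun x hx => by simp [(Submodule.Quotient.mk_eq_zero W).2 hx]⟩
  left_inv f := Subtype.ext (by ext; simp)
  right_inv g := W.linearMap_qext (by ext; simp)

section Counting

variable {𝔽 M N : Type*} [Field 𝔽] [Fintype 𝔽] [AddCommGroup M] [Module 𝔽 M]
  [FiniteDimensional 𝔽 M] [AddCommGroup N] [Module 𝔽 N] [FiniteDimensional 𝔽 N]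

local notation "q" => Fintype.card 𝔽

-- Over `ℤ` rather than `ℕ`, so that no subtraction truncates; for `dim M > dim N` the factor
-- `i = dim N` vanishes.
theorem card_injective_linearMap :
    (Nat.card {f : M →ₗ[𝔽] N // Injective f} : ℤ) =
      ∏ i ∈ range (finrank 𝔽 M), ((q : ℤ) ^ finrank 𝔽 N - (q : ℤ) ^ i) := by
  have : Finite N := Module.finite_of_finite 𝔽
  by_cases hMN : finrank 𝔽 M ≤ finrank 𝔽 N
  · let b := finBasis 𝔽 M
    have e : {f : M →ₗ[𝔽] N // Injective f} ≃
        {v : Fin (finrank 𝔽 M) → N // LinearIndependent 𝔽 v} :=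
      (b.constr 𝔽).symm.toEquiv.subtypeEquiv fun f =>
        f.injective_iff_linearIndependent_comp_basis b
    rw [Nat.card_congr e, card_linearIndependent hMN, Fin.prod_univ_eq_prod_range
      (fun i => q ^ finrank 𝔽 N - q ^ i), Nat.cast_prod]
    refine prod_congr rfl fun i hi => ?_
    have : q ^ i ≤ q ^ finrank 𝔽 N :=
      Nat.pow_le_pow_right Fintype.card_pos (by have := mem_range.1 hi; omega)
    simp [Nat.cast_sub this]
  · have : IsEmpty {f : M →ₗ[𝔽] N // Injective f} :=
      ⟨fun f => hMN (LinearMap.finrank_le_finrank_of_injective f.2)⟩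
    rw [Nat.card_of_isEmpty, Nat.cast_zero, prod_eq_zero (mem_range.2 (not_le.1 hMN))]
    exact sub_self _

theorem card_linearMap_le_ker (W : Submodule 𝔽 M) :
    Nat.card {f : M →ₗ[𝔽] N // W ≤ LinearMap.ker f} =
      q ^ ((finrank 𝔽 M - finrank 𝔽 W) * finrank 𝔽 N) := by
  have : Finite (M ⧸ W →ₗ[𝔽] N) := Module.finite_of_finite 𝔽
  have := Fintype.ofFinite (M ⧸ W →ₗ[𝔽] N)
  rw [Nat.card_congr W.liftQEquiv, Nat.card_eq_fintype_card, card_eq_pow_finrank (K := 𝔽),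
    finrank_linearMap, W.finrank_quotient]

theorem card_linearMap_ker_eq (T : Submodule 𝔽 M) :
    (Nat.card {f : M →ₗ[𝔽] N // LinearMap.ker f = T} : ℤ) =
      ∏ i ∈ range (finrank 𝔽 M - finrank 𝔽 T), ((q : ℤ) ^ finrank 𝔽 N - (q : ℤ) ^ i) := by
  have hker : ∀ g : M ⧸ T →ₗ[𝔽] N,
      Injective g ↔ LinearMap.ker (T.liftQEquiv.symm g : M →ₗ[𝔽] N) = T := fun g => by
    rw [← LinearMap.ker_eq_bot]
    change _ ↔ LinearMap.ker (g ∘ₗ T.mkQ) = T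
    conv_rhs => rw [LinearMap.ker_comp]; rhs; rw [← T.ker_mkQ]
    exact (Submodule.comap_injective_of_surjective T.mkQ_surjective).eq_iff.symm
  have e : {g : M ⧸ T →ₗ[𝔽] N // Injective g} ≃ {f : M →ₗ[𝔽] N // LinearMap.ker f = T} :=
    (T.liftQEquiv.symm.subtypeEquiv hker).trans (Equiv.subtypeSubtypeEquivSubtype fun h => h.ge)
  rw [← Nat.card_congr e, card_injective_linearMap, T.finrank_quotient]

theorem sum_card_linearMap_ker_eq [Fintype (Submodule 𝔽 M)] (W : Submodule 𝔽 M) :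
    ∑ T ∈ univ.filter (W ≤ ·), Nat.card {f : M →ₗ[𝔽] N // LinearMap.ker f = T} =
      Nat.card {f : M →ₗ[𝔽] N // W ≤ LinearMap.ker f} := by
  have : Finite (M →ₗ[𝔽] N) := Module.finite_of_finite 𝔽
  rw [← Nat.card_congr (Equiv.sigmaSubtypeFiberEquivSubtype LinearMap.ker fun _ => Iff.rfl),
    Nat.card_sigma, sum_subtype (p := (W ≤ ·)) _ fun T => by simp]

open Polynomial in
theorem sum_Ici_prod_X_sub_C [Fintype (Submodule 𝔽 M)] (W : Submodule 𝔽 M) :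
    ∑ T ∈ univ.filter (W ≤ ·), ∏ i ∈ range (finrank 𝔽 M - finrank 𝔽 T), (X - C ((q : ℤ) ^ i)) =
      (X : ℤ[X]) ^ (finrank 𝔽 M - finrank 𝔽 W) := by
  have hq : 1 < (q : ℤ) := mod_cast Fintype.one_lt_card
  refine eq_of_infinite_eval_eq _ _ ((Set.infinite_range_of_injective
    (pow_right_injective₀ (by omega) hq.ne')).mono ?_)
  rintro _ ⟨d, rfl⟩
  have h := congrArg (Nat.cast : ℕ → ℤ)
    ((sum_card_linearMap_ker_eq (N := Fin d → 𝔽) W).trans (card_linearMap_le_ker W))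
  push_cast [card_linearMap_ker_eq, finrank_fin_fun] at h
  simp only [Set.mem_ofPred_eq, eval_finsetSum, eval_prod, eval_sub, eval_X, eval_C, eval_pow]
  rw [h, ← pow_mul, mul_comm]

end Counting

/-- The Möbius function `μ(T, Y)` of the lattice of subspaces of a vector space over `𝔽_q`,
where `k = dim Y - dim T`. -/
def subspaceMobius (R : Type*) [Ring R] (q k : ℕ) : R :=
  (-1) ^ k * (q : R) ^ (k * (k - 1) / 2)

theorem Int.cast_subspaceMobius (R : Type*) [Ring R] (q k : ℕ) :
    ((subspaceMobius ℤ q k : ℤ) : R) = subspaceMobius R q k := by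
  simp [subspaceMobius]

theorem prod_range_neg_pow (q k : ℕ) : ∏ i ∈ range k, -((q : ℤ) ^ i) = subspaceMobius ℤ q k := by
  rw [prod_neg, card_range, prod_pow_eq_pow_sum, sum_range_id, subspaceMobius]

section Mobius

variable {𝔽 : Type*} [Field 𝔽] [Fintype 𝔽] (R : Type*) [Ring R]

local notation "q" => Fintype.card 𝔽

open Polynomial in
theorem sum_Ici_subspaceMobius {M : Type*} [AddCommGroup M] [Module 𝔽 M]
    [FiniteDimensional 𝔽 M] [Fintype (Submodule 𝔽 M)] (W : Submodule 𝔽 M) :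
    ∑ T ∈ univ.filter (W ≤ ·), subspaceMobius R q (finrank 𝔽 M - finrank 𝔽 T) =
      if W = ⊤ then 1 else 0 := by
  have h := congrArg (Polynomial.eval 0) (sum_Ici_prod_X_sub_C W)
  simp only [eval_finsetSum, eval_prod, eval_sub, eval_X, eval_C, eval_pow, zero_sub,
    prod_range_neg_pow] at h
  have hW : W = ⊤ ↔ finrank 𝔽 M - finrank 𝔽 W = 0 := by
    rw [Submodule.eq_top_iff_finrank_eq, Nat.sub_eq_zero_iff_le, W.finrank_le.ge_iff_eq,
      eq_comm]
  simp_rw [← Int.cast_subspaceMobius R, ← Int.cast_sum, h, hW]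
  split_ifs with h0 <;> simp [h0]

variable {V : Type*} [AddCommGroup V] [Module 𝔽 V] [FiniteDimensional 𝔽 V]
  [Fintype (Submodule 𝔽 V)]

theorem sum_Icc_subspaceMobius (W Y : Submodule 𝔽 V) :
    ∑ T ∈ univ.filter (fun T => W ≤ T ∧ T ≤ Y),
        subspaceMobius R q (finrank 𝔽 Y - finrank 𝔽 T) = if W = Y then 1 else 0 := by
  by_cases hWY : W ≤ Y
  swap
  · rw [if_neg fun h => hWY h.le, filter_false_of_mem fun T _ h => hWY (h.1.trans h.2),
      sum_empty]
  have : Finite (Submodule 𝔽 Y) :=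
    have : Finite Y := Module.finite_of_finite 𝔽
    Finite.of_injective _ SetLike.coe_injective
  have := Fintype.ofFinite (Submodule 𝔽 Y)
  have hW : W.comap Y.subtype = ⊤ ↔ W = Y :=
    Submodule.comap_subtype_eq_top.trans ⟨hWY.antisymm, ge_of_eq⟩
  rw [← if_congr hW rfl rfl, ← sum_Ici_subspaceMobius]
  refine sum_nbij' (·.comap Y.subtype) (·.map Y.subtype) ?_ ?_ ?_ ?_ ?_
  all_goals intro T hT; simp only [mem_filter, mem_univ, true_and] at hT ⊢
  · exact Submodule.comap_mono hT.1
  · refine ⟨?_, Submodule.map_subtype_le _ _⟩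
    rw [← inf_eq_right.2 hWY, ← Submodule.map_comap_subtype]
    exact Submodule.map_mono hT
  · simp only [Submodule.map_comap_subtype, inf_eq_right.2 hT.2]
  · exact Submodule.comap_map_eq_of_injective Y.injective_subtype T
  · rw [← Submodule.finrank_map_subtype_eq, Submodule.map_comap_subtype, inf_eq_right.2 hT.2]

theorem sum_Icc_subspaceMobius_mul_zeta (α β : Submodule 𝔽 V → R)
    (hβ : ∀ W, β W = ∑ U ∈ univ.filter (· ≤ W), α U) (W Y : Submodule 𝔽 V) :
    ∑ T ∈ univ.filter (fun T => W ≤ T ∧ T ≤ Y),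
        subspaceMobius R q (finrank 𝔽 Y - finrank 𝔽 T) * β T =
      ∑ U ∈ univ.filter (W ⊔ · = Y), α U := by
  simp_rw [hβ, mul_sum]
  rw [sum_comm' (t' := univ) (s' := fun U => univ.filter fun T => W ⊔ U ≤ T ∧ T ≤ Y),
    sum_filter]
  · refine sum_congr rfl fun U _ => ?_
    rw [← sum_mul, sum_Icc_subspaceMobius, ite_mul, one_mul, zero_mul]
  · intro T U
    simp only [mem_filter, mem_univ, true_and, sup_le_iff]
    tauto

end Mobius

theorem vanishing_iff_interval_sums_vanish_general
    {𝔽 V K : Type*} [Field 𝔽] [Fintype 𝔽] [Field K]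
    [AddCommGroup V] [Module 𝔽 V] [FiniteDimensional 𝔽 V]
    [Fintype (Submodule 𝔽 V)]
    (q : ℕ) (hq : Fintype.card 𝔽 = q)
    (g : ℕ)
    (α β : Submodule 𝔽 V → K)
    (hβ : ∀ W : Submodule 𝔽 V,
      β W = ∑ U ∈ Finset.univ.filter (fun U : Submodule 𝔽 V => U ≤ W), α U) :
    (∀ U : Submodule 𝔽 V, g ≤ Module.finrank 𝔽 U → α U = 0)
    ↔ (∀ W Y : Submodule 𝔽 V, W ≤ Y →
        g ≤ Module.finrank 𝔽 Y - Module.finrank 𝔽 W →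
        (∑ T ∈ Finset.univ.filter (fun T : Submodule 𝔽 V => W ≤ T ∧ T ≤ Y),
          (-1 : K) ^ (Module.finrank 𝔽 Y - Module.finrank 𝔽 T)
            * (q : K) ^ ((Module.finrank 𝔽 Y - Module.finrank 𝔽 T)
                * (Module.finrank 𝔽 Y - Module.finrank 𝔽 T - 1) / 2)
            * β T) = 0) := by
  subst hq
  have hsum := sum_Icc_subspaceMobius_mul_zeta K α β hβ
  simp only [subspaceMobius] at hsum
  simp only [hsum]
  constructor
  · intro hα W Y _ hg
    refine sum_eq_zero fun U hU => hα U ?_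
    have hdim := Submodule.finrank_sup_add_finrank_inf_eq W U
    rw [(mem_filter.1 hU).2] at hdim
    omega
  · intro h U hU
    simpa [filter_eq'] using h ⊥ U bot_le (by simpa using hU)

theorem vanishing_iff_interval_sums_vanish
    {𝔽 V K : Type*} [Field 𝔽] [Fintype 𝔽] [Field K]
    [AddCommGroup V] [Module 𝔽 V] [FiniteDimensional 𝔽 V]
    [Fintype (Submodule 𝔽 V)]
    (q n : ℕ) (hq : Fintype.card 𝔽 = q) (hn : Module.finrank 𝔽 V = n)
    (g : ℕ)
    (α β : Submodule 𝔽 V → K)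
    (hβ : ∀ W : Submodule 𝔽 V,
      β W = ∑ U ∈ Finset.univ.filter (fun U : Submodule 𝔽 V => U ≤ W), α U) :
    (∀ U : Submodule 𝔽 V, g ≤ Module.finrank 𝔽 U → α U = 0)
    ↔ (∀ W Y : Submodule 𝔽 V, W ≤ Y →
        g ≤ Module.finrank 𝔽 Y - Module.finrank 𝔽 W →
        (∑ T ∈ Finset.univ.filter (fun T : Submodule 𝔽 V => W ≤ T ∧ T ≤ Y),
          (-1 : K) ^ (Module.finrank 𝔽 Y - Module.finrank 𝔽 T)
            * (q : K) ^ ((Module.finrank 𝔽 Y - Module.finrank 𝔽 T)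
                * (Module.finrank 𝔽 Y - Module.finrank 𝔽 T - 1) / 2)
            * β T) = 0) :=
  vanishing_iff_interval_sums_vanish_general q hq g α β hβ
end

section
/- Let Q ≥ 2 be a natural number, b a prime, and r, s natural numbers with 1 ≤ r, s ≤ b-1 and r·s ≡ 1 (mod b). Then [r]_Q · [s]_{Q^r} = [rs]_Q ≡ 1 (mod [b]_Q); consequently [r]_Q is invertible modulo [b]_Q, i.e., gcd([r]_Q, [b]_Q) = 1. -/
/-- The q-integer `[m]_Q = 1 + Q + ⋯ + Q^(m-1)`. -/
def qint (Q m : ℕ) : ℕ := ∑ i ∈ Finset.range m, Q ^ i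

/-!
Splitting `[rs]_Q` into `s` blocks of length `r` gives `[rs]_Q = [r]_Q [s]_{Q^r}`; in particular
`[b]_Q ∣ [bk]_Q`, and since `[m + n]_Q = [m]_Q + Q^m [n]_Q`, the map `n ↦ [n]_Q` sends residues
modulo `b` to residues modulo `[b]_Q`. Hence `rs ≡ 1 (mod b)` gives `[rs]_Q ≡ [1]_Q = 1`, and `[r]_Q`,
a divisor of `[rs]_Q`, is coprime to `[b]_Q`.
-/

@[simp]
lemma qint_one (Q : ℕ) : qint Q 1 = 1 := by
  simp [qint]

lemma qint_add (Q m n : ℕ) : qint Q (m + n) = qint Q m + Q ^ m * qint Q n := by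
  simp only [qint, Finset.sum_range_add, Finset.mul_sum, pow_add]

lemma qint_mul (Q r s : ℕ) : qint Q r * qint (Q ^ r) s = qint Q (r * s) := by
  induction s with
  | zero => simp [qint]
  | succ s ih =>
    rw [qint_add, mul_add, ih, Nat.mul_succ, qint_add, ← pow_mul]
    simp only [qint_one]
    ring

lemma qint_dvd_qint_mul (Q b k : ℕ) : qint Q b ∣ qint Q (b * k) :=
  Dvd.intro _ (qint_mul Q b k)

lemma qint_modEq_qint (Q : ℕ) {b m n : ℕ} (h : m ≡ n [MOD b]) :
    qint Q m ≡ qint Q n [MOD qint Q b] := by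
  wlog hmn : m ≤ n generalizing m n
  · exact (this h.symm (le_of_not_ge hmn)).symm
  obtain ⟨k, hk⟩ := (Nat.modEq_iff_dvd' hmn).mp h
  obtain ⟨c, hc⟩ := qint_dvd_qint_mul Q b k
  have hn : n = m + b * k := by omega
  calc qint Q m ≡ qint Q m + qint Q b * (Q ^ m * c) [MOD qint Q b] :=
        (Nat.add_mul_mod_self_left _ _ _).symm
    _ = qint Q n := by rw [hn, qint_add, hc]; ring

theorem qint_invertible_mod_general (Q b r s : ℕ) (hrs : r * s ≡ 1 [MOD b]) :
    qint Q r * qint (Q ^ r) s = qint Q (r * s)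
    ∧ qint Q (r * s) ≡ 1 [MOD qint Q b]
    ∧ Nat.gcd (qint Q r) (qint Q b) = 1 := by
  have hmod : qint Q (r * s) ≡ 1 [MOD qint Q b] := by
    simpa only [qint_one] using qint_modEq_qint Q hrs
  have hcop : Nat.Coprime (qint Q (r * s)) (qint Q b) := by
    simpa only [Nat.gcd_one_left] using hmod.gcd_eq
  exact ⟨qint_mul Q r s, hmod, hcop.coprime_dvd_left (Dvd.intro _ (qint_mul Q r s))⟩

/-- For a prime `b` and `r·s ≡ 1 (mod b)` with `1 ≤ r,s ≤ b-1`: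
`[r]_Q · [s]_{Q^r} = [rs]_Q ≡ 1 (mod [b]_Q)`, hence `gcd([r]_Q, [b]_Q) = 1`. -/
theorem qint_invertible_mod (Q b r s : ℕ) (hQ : 2 ≤ Q) (hb : b.Prime)
    (hr : 1 ≤ r) (hr' : r ≤ b - 1) (hs : 1 ≤ s) (hs' : s ≤ b - 1)
    (hrs : r * s ≡ 1 [MOD b]) :
    qint Q r * qint (Q ^ r) s = qint Q (r * s)
    ∧ qint Q (r * s) ≡ 1 [MOD qint Q b]
    ∧ Nat.gcd (qint Q r) (qint Q b) = 1 :=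
  qint_invertible_mod_general Q b r s hrs
end

section
/- Let q be a prime power, V an n-dimensional vector space over F_q, K = {k_1 < ... < k_r} and L = {μ_1, ..., μ_s} disjoint subsets of {0, 1, ..., b-1}, and suppose there is a prime p such that the multiplicative order of q modulo p is exactly b. Let F be a family of subspaces of V such that each member's dimension is congruent mod b to some element of K, and the dimension of the intersection of any two distinct members is congruent mod b to some element of L. Then |F| ≤ Σ_{j=s-r+1}^{s} [n choose j]_q + Σ_{t=1}^{r} [n choose k_t]_q, and if moreover s < k_1 + r then |F| ≤ Σ_{j=s-r+1}^{s} [n choose j]_q. -/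
/-!
Work in a field `R` (here `ZMod p`) in which `q` has multiplicative order `b`, so that
`q ^ a = q ^ c` in `R` iff `a ≡ c [MOD b]`. For `W ∈ 𝓕` put
`f_W U = ∏ₜ (q ^ dim (U ⊓ W) - q ^ μₜ)`, and for every subspace `B` with `dim B + r ≤ s` whose
dimension is not congruent to any `kₜ` put `g_B U = ∏ₜ (q ^ dim U - q ^ kₜ) · [B ≤ U]`.
Since `q ^ dim (U ⊓ W) = #(U ⊓ W) = ∑_{v ∈ W} [𝔽 ∙ v ≤ U]` and `[A ≤ U] [B ≤ U] = [A ⊔ B ≤ U]`,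
all these functions lie in the span of the indicators `U ↦ [A ≤ U]` with `dim A ≤ s`.
Evaluated at the members of `𝓕` and at the `B`'s they form a triangular family, so
`|𝓕| + #{B} ≤ #{A : dim A ≤ s} = ∑_{j ≤ s} [n choose j]_q`. What is left after removing the
dimensions of the `B`'s are the top `r` dimensions `s - r < j ≤ s` and the `kₜ ≤ s - r`, and the
latter do not occur when `s < k₁ + r`. The number of `j`-dimensional subspaces is
`[n choose j]_q` by counting linearly independent `j`-tuples in two ways.
-/

/-- The Gaussian binomial coefficient `[n choose d]_q`, via the q-Pascal rule
(it is `0` when `d > n`). -/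
def qchoose (q : ℕ) : ℕ → ℕ → ℕ
  | _, 0 => 1
  | 0, _ + 1 => 0
  | n + 1, k + 1 => qchoose q n k + q ^ (k + 1) * qchoose q n (k + 1)

open Finset Module Submodule

theorem prod_range_succ_mul_sub_pow {R : Type*} [CommRing R] (x y : R) (j : ℕ) :
    ∏ i ∈ range (j + 1), (x * y - x ^ i)
      = (x * y - 1) * x ^ j * ∏ i ∈ range j, (y - x ^ i) := by
  have h : ∀ i ∈ range j, x * y - x ^ (i + 1) = x * (y - x ^ i) := fun i _ => by ring
  rw [prod_range_succ', prod_congr rfl h, prod_mul_distrib, prod_const, card_range]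
  ring

theorem prod_sub_pow_mul_qchoose {R : Type*} [CommRing R] (q m j : ℕ) :
    (∏ i ∈ range j, ((q : R) ^ j - (q : R) ^ i)) * qchoose q m j
      = ∏ i ∈ range j, ((q : R) ^ m - (q : R) ^ i) := by
  induction m generalizing j with
  | zero =>
    cases j with
    | zero => simp [qchoose]
    | succ j => simp [qchoose, prod_range_succ']
  | succ m ih =>
    cases j with
    | zero => simp [qchoose]
    | succ j =>
      have hj := ih j
      have hj1 := ih (j + 1)
      rw [pow_succ', prod_range_succ_mul_sub_pow, prod_range_succ] at hj1
      rw [pow_succ', prod_range_succ_mul_sub_pow, pow_succ', prod_range_succ_mul_sub_pow, qchoose]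
      push_cast
      linear_combination ((q : R) * q ^ j - 1) * (q : R) ^ j * hj + (q : R) * q ^ j * hj1

instance Submodule.finite_of_finite {R M : Type*} [Semiring R] [AddCommMonoid M] [Module R M]
    [Finite M] : Finite (Submodule R M) :=
  Finite.of_injective _ SetLike.coe_injective

section Counting

variable {K V : Type*} [DivisionRing K] [Fintype K] [AddCommGroup V] [Module K V] [Finite V]

theorem natCard_linearIndependent_eq_prod (j : ℕ) :
    (Nat.card {s : Fin j → V // LinearIndependent K s} : ℤ)
      = ∏ i ∈ range j, ((Fintype.card K : ℤ) ^ finrank K V - (Fintype.card K : ℤ) ^ i) := by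
  have hq : 1 ≤ Fintype.card K := Fintype.card_pos
  rcases le_or_gt j (finrank K V) with hj | hj
  · rw [card_linearIndependent hj, Nat.cast_prod, ← Fin.prod_univ_eq_prod_range]
    refine prod_congr rfl fun i _ => ?_
    rw [Nat.cast_sub (Nat.pow_le_pow_right hq (i.2.le.trans hj))]
    push_cast; rfl
  · have : IsEmpty {s : Fin j → V // LinearIndependent K s} :=
      ⟨fun s => by simpa using (s.2.fintype_card_le_finrank.trans_lt hj).ne⟩
    rw [Nat.card_of_isEmpty, Nat.cast_zero, prod_eq_zero (mem_range.2 hj) (sub_self _)]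

def linearIndependentSpanEquiv {j : ℕ} (W : Submodule K V) (hW : finrank K W = j) :
    {s : Fin j → V // LinearIndependent K s ∧ span K (Set.range s) = W}
      ≃ {t : Fin j → W // LinearIndependent K t} where
  toFun s := ⟨fun i => ⟨s.1 i, s.2.2.le (subset_span ⟨i, rfl⟩)⟩,
    .of_comp W.subtype s.2.1⟩
  invFun t := ⟨W.subtype ∘ t.1, t.2.map' _ W.ker_subtype, by
    rw [Set.range_comp, span_image, t.2.span_eq_top_of_card_eq_finrank' (by simp [hW]),
      Submodule.map_top, range_subtype]⟩
  left_inv _ := rfl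
  right_inv _ := rfl

theorem natCard_linearIndependent_eq_mul (j : ℕ) :
    (Nat.card {s : Fin j → V // LinearIndependent K s} : ℤ)
      = Nat.card {W : Submodule K V // finrank K W = j}
        * ∏ i ∈ range j, ((Fintype.card K : ℤ) ^ j - (Fintype.card K : ℤ) ^ i) := by
  have := Fintype.ofFinite {W : Submodule K V // finrank K W = j}
  let f : {s : Fin j → V // LinearIndependent K s} → {W : Submodule K V // finrank K W = j} :=
    fun s => ⟨span K (Set.range s.1), by rw [finrank_span_eq_card s.2, Fintype.card_fin]⟩
  have hfiber (W : {W : Submodule K V // finrank K W = j}) :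
      {s // f s = W}
        ≃ {s : Fin j → V // LinearIndependent K s ∧ span K (Set.range s) = W.1} :=
    (Equiv.subtypeSubtypeEquivSubtypeExists _ _).trans
      (Equiv.subtypeEquivRight fun s => by simp [f, Subtype.ext_iff])
  rw [← Nat.card_congr (Equiv.sigmaFiberEquiv f), Nat.card_sigma, Nat.cast_sum,
    sum_congr rfl fun W _ => by
      rw [Nat.card_congr ((hfiber W).trans (linearIndependentSpanEquiv W.1 W.2)),
        natCard_linearIndependent_eq_prod, W.2],
    sum_const, card_univ, Nat.card_eq_fintype_card, nsmul_eq_mul]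

theorem natCard_finrank_eq (j : ℕ) :
    Nat.card {W : Submodule K V // finrank K W = j}
      = qchoose (Fintype.card K) (finrank K V) j := by
  have hq : (1 : ℤ) < Fintype.card K := by exact_mod_cast Fintype.one_lt_card
  have hprod : ∏ i ∈ range j, ((Fintype.card K : ℤ) ^ j - (Fintype.card K : ℤ) ^ i) ≠ 0 :=
    prod_ne_zero_iff.2 fun i hi => sub_ne_zero.2 (pow_lt_pow_right₀ hq (mem_range.1 hi)).ne'
  have h := (natCard_linearIndependent_eq_mul (K := K) (V := V) j).symm.trans
    ((natCard_linearIndependent_eq_prod j).trans (prod_sub_pow_mul_qchoose _ _ _).symm)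
  exact_mod_cast mul_right_cancel₀ hprod (h.trans (mul_comm _ _))

theorem natCard_finrank_mem (D : Finset ℕ) :
    Nat.card {W : Submodule K V // finrank K W ∈ D}
      = ∑ j ∈ D, qchoose (Fintype.card K) (finrank K V) j := by
  let f : {W : Submodule K V // finrank K W ∈ D} → D := fun W => ⟨finrank K W.1, W.2⟩
  have hfiber (j : D) : {W // f W = j} ≃ {W : Submodule K V // finrank K W = j} :=
    { toFun W := ⟨W.1.1, congrArg Subtype.val W.2⟩
      invFun W := ⟨⟨W.1, by rw [W.2]; exact j.2⟩, Subtype.ext W.2⟩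
      left_inv _ := rfl
      right_inv _ := rfl }
  rw [← Nat.card_congr (Equiv.sigmaFiberEquiv f), Nat.card_sigma, ← sum_coe_sort D]
  exact sum_congr rfl fun j _ => (Nat.card_congr (hfiber j)).trans (natCard_finrank_eq j)

theorem natCard_finrank_le (d : ℕ) :
    Nat.card {W : Submodule K V // finrank K W ≤ d}
      = ∑ j ∈ range (d + 1), qchoose (Fintype.card K) (finrank K V) j := by
  simpa [Nat.lt_succ_iff] using natCard_finrank_mem (K := K) (V := V) (range (d + 1))

end Counting

theorem linearIndependent_of_triangular {ι X R : Type*} [Ring R] [NoZeroDivisors R]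
    (v : ι → X → R) (x : ι → X) (ρ : ι → ℕ) (hdiag : ∀ i, v i (x i) ≠ 0)
    (htri : ∀ i j, j ≠ i → v j (x i) ≠ 0 → ρ j < ρ i) : LinearIndependent R v := by
  rw [linearIndependent_iff']
  intro s g hg i
  induction i using (measure ρ).wf.induction with | _ i ih => ?_
  intro hi
  have hsum : ∑ j ∈ s, g j * v j (x i) = 0 := by simpa using congr_fun hg (x i)
  rw [sum_eq_single_of_mem i hi fun j hj hji => ?_] at hsum
  · exact (mul_eq_zero.1 hsum).resolve_right (hdiag i)
  · by_cases hv : v j (x i) = 0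
    · rw [hv, mul_zero]
    · rw [ih j (htri i j hji hv) hj, zero_mul]

theorem mul_indicator_Ici_apply_ne_zero {α M : Type*} [Preorder α] [MulZeroOneClass M]
    (f : α → M) (a x : α) :
    (f * (Set.Ici a).indicator (1 : α → M)) x ≠ 0 ↔ f x ≠ 0 ∧ a ≤ x := by
  by_cases h : a ≤ x <;> simp [h]

section IciIndicator

variable {K V : Type*} [DivisionRing K] [AddCommGroup V] [Module K V]
variable (R : Type*) [CommRing R]

/-- The analogue of the polynomials of degree at most `d`: the indicator `U ↦ [A ≤ U]` plays the
role of a monomial of degree `finrank A`. -/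
noncomputable def iciIndicatorSpan (d : ℕ) : Submodule R (Submodule K V → R) :=
  span R ((fun A => (Set.Ici A).indicator 1) '' {A | finrank K A ≤ d})

variable {R}

theorem iciIndicator_mem_iciIndicatorSpan {A : Submodule K V} {d : ℕ} (h : finrank K A ≤ d) :
    (Set.Ici A).indicator 1 ∈ iciIndicatorSpan R d :=
  subset_span ⟨A, h, rfl⟩

theorem iciIndicatorSpan_mono {d d' : ℕ} (h : d ≤ d') :
    iciIndicatorSpan (K := K) (V := V) R d ≤ iciIndicatorSpan R d' :=
  span_mono (Set.image_mono fun _ hA => le_trans hA h)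

theorem mul_mem_iciIndicatorSpan [FiniteDimensional K V] {d d' : ℕ} {f g : Submodule K V → R}
    (hf : f ∈ iciIndicatorSpan R d) (hg : g ∈ iciIndicatorSpan R d') :
    f * g ∈ iciIndicatorSpan R (d + d') := by
  suffices iciIndicatorSpan R d * iciIndicatorSpan R d' ≤ iciIndicatorSpan (V := V) R (d + d') from
    this (mul_mem_mul hf hg)
  rw [iciIndicatorSpan, iciIndicatorSpan, span_mul_span, span_le]
  rintro _ ⟨_, ⟨A, hA, rfl⟩, _, ⟨B, hB, rfl⟩, rfl⟩
  dsimp only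
  rw [← Set.inter_indicator_one, Set.Ici_inter_Ici]
  exact iciIndicator_mem_iciIndicatorSpan
    ((finrank_add_le_finrank_add_finrank A B).trans (add_le_add hA hB))

theorem prod_mem_iciIndicatorSpan [FiniteDimensional K V] {ι : Type*} (s : Finset ι)
    {f : ι → Submodule K V → R}
    (hf : ∀ i ∈ s, f i ∈ iciIndicatorSpan R 1) : ∏ i ∈ s, f i ∈ iciIndicatorSpan R #s := by
  classical
  induction s using Finset.induction_on with
  | empty => simpa using iciIndicator_mem_iciIndicatorSpan (R := R) (A := ⊥) (by simp)
  | insert i s hi ih =>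
    rw [prod_insert hi, card_insert_of_notMem hi, add_comm]
    exact mul_mem_iciIndicatorSpan (hf i (mem_insert_self i s))
      (ih fun j hj => hf j (mem_insert_of_mem hj))

theorem natCard_inf_mem_iciIndicatorSpan [Finite V] (W : Submodule K V) :
    (fun U : Submodule K V => (Nat.card ↥(U ⊓ W) : R)) ∈ iciIndicatorSpan R 1 := by
  classical
  have := Fintype.ofFinite W
  have hcount : (fun U : Submodule K V => (Nat.card ↥(U ⊓ W) : R))
      = ∑ v : W, (Set.Ici (K ∙ (v : V))).indicator 1 := by
    funext U
    rw [Finset.sum_apply]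
    simp only [Set.indicator_apply, Set.mem_Ici, span_singleton_le_iff_mem, Pi.one_apply]
    rw [Finset.sum_boole, ← Fintype.card_subtype, ← Nat.card_eq_fintype_card]
    exact congrArg _ (Nat.card_congr
      { toFun x := ⟨⟨x, x.2.2⟩, x.2.1⟩
        invFun v := ⟨v.1, v.2, v.1.2⟩
        left_inv _ := rfl
        right_inv _ := rfl })
  rw [hcount]
  exact sum_mem fun v _ => iciIndicator_mem_iciIndicatorSpan
    (by simpa using finrank_span_le_card (R := K) ({(v : V)} : Set V))

theorem LinearIndependent.natCard_le_of_mem_iciIndicatorSpan [Finite V] [Nontrivial R] {ι : Type*}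
    {v : ι → Submodule K V → R} (hv : LinearIndependent R v) {d : ℕ}
    (hmem : ∀ i, v i ∈ iciIndicatorSpan R d) :
    Nat.card ι ≤ Nat.card {A : Submodule K V // finrank K A ≤ d} := by
  classical
  set w := (fun A => (Set.Ici A).indicator (1 : Submodule K V → R)) '' {A | finrank K A ≤ d}
  have := (Set.toFinite w).fintype
  have hspan : Set.range v ≤ span R w := Set.range_subset_iff.2 hmem
  have := hv.finite_of_le_span_finite v w hspan
  have := Fintype.ofFinite ι
  calc Nat.card ι = Fintype.card ι := Nat.card_eq_fintype_card
    _ ≤ Fintype.card w := linearIndependent_le_span_aux' v hv w hspan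
    _ = w.ncard := by rw [← Nat.card_coe_set_eq, Nat.card_eq_fintype_card]
    _ ≤ Set.ncard {A : Submodule K V | finrank K A ≤ d} := Set.ncard_image_le (Set.toFinite _)
    _ = Nat.card {A : Submodule K V // finrank K A ≤ d} := Nat.card_coe_set_eq _ |>.symm

end IciIndicator

section RayChaudhuriWilson

variable {K V R : Type*} [Field K] [AddCommGroup V] [Module K V] [Field R]

noncomputable def finrankInfProd {m : ℕ} (θ : R) (c : Fin m → ℕ) (W : Submodule K V) :
    Submodule K V → R :=
  fun U => ∏ t, (θ ^ finrank K ↥(U ⊓ W) - θ ^ c t)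

theorem finrankInfProd_mem_iciIndicatorSpan [Fintype K] [Finite V] {m : ℕ} (c : Fin m → ℕ)
    (W : Submodule K V) : finrankInfProd (Fintype.card K : R) c W ∈ iciIndicatorSpan R m := by
  have hprod : finrankInfProd (Fintype.card K : R) c W
      = ∏ t, ((fun U : Submodule K V => (Nat.card ↥(U ⊓ W) : R))
        - ((Fintype.card K : R) ^ c t) • (Set.Ici ⊥).indicator 1) := by
    funext U
    simp only [finrankInfProd, Finset.prod_apply, Pi.sub_apply, Pi.smul_apply]
    rw [Module.natCard_eq_pow_finrank (K := K) (V := ↥(U ⊓ W)), Nat.card_eq_fintype_card]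
    simp
  have h := prod_mem_iciIndicatorSpan univ fun t _ =>
    sub_mem (natCard_inf_mem_iciIndicatorSpan W)
      (smul_mem _ ((Fintype.card K : R) ^ c t)
        (iciIndicator_mem_iciIndicatorSpan (R := R) (A := ⊥) (d := 1) (by simp)))
  rwa [card_univ, Fintype.card_fin, ← hprod] at h

theorem finrankInfProd_eq_zero_iff {θ : R} {b m : ℕ}
    (hθ : ∀ a c, θ ^ a = θ ^ c ↔ a ≡ c [MOD b]) (c : Fin m → ℕ) (W U : Submodule K V) :
    finrankInfProd θ c W U = 0 ↔ ∃ t, finrank K ↥(U ⊓ W) ≡ c t [MOD b] := by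
  simp [finrankInfProd, prod_eq_zero_iff, sub_eq_zero, hθ]

/- Evaluated at the members of `𝓕` and `𝓑`, the family is triangular once `𝓕` is put below
`𝓑` and `𝓑` is ordered by dimension. -/
theorem linearIndependent_finrankInfProd [FiniteDimensional K V] {θ : R} {b r s : ℕ}
    (hθ : ∀ a c, θ ^ a = θ ^ c ↔ a ≡ c [MOD b])
    (k : Fin r → ℕ) (μ : Fin s → ℕ) (hkμ : ∀ t t', ¬ k t ≡ μ t' [MOD b])
    (𝓕 : Finset (Submodule K V)) (𝓑 : Set (Submodule K V))
    (hdim : ∀ W ∈ 𝓕, ∃ t, finrank K W ≡ k t [MOD b])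
    (hint : ∀ U ∈ 𝓕, ∀ W ∈ 𝓕, U ≠ W → ∃ t, finrank K ↥(U ⊓ W) ≡ μ t [MOD b])
    (h𝓑 : ∀ B ∈ 𝓑, ∀ t, ¬ finrank K B ≡ k t [MOD b]) :
    LinearIndependent R (Sum.elim (fun W : 𝓕 => finrankInfProd θ μ W.1)
      (fun B : 𝓑 => finrankInfProd θ k ⊤ * (Set.Ici B.1).indicator 1)) := by
  have hzero {m} := finrankInfProd_eq_zero_iff (K := K) (V := V) (m := m) hθ
  refine linearIndependent_of_triangular _ (Sum.elim (·.1) (·.1))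
    (Sum.elim 0 fun B => finrank K B.1 + 1) ?diag ?tri
  case diag =>
    rintro (⟨W, hW⟩ | ⟨B, hB⟩)
    · simp only [Sum.elim_inl, Ne, hzero, not_exists]
      obtain ⟨t', ht'⟩ := hdim W hW
      exact fun t ht => hkμ t' t (ht'.symm.trans (by rwa [inf_idem] at ht))
    · simp only [Sum.elim_inr]
      rw [mul_indicator_Ici_apply_ne_zero, Ne, hzero, inf_top_eq]
      simpa using h𝓑 B hB
  case tri =>
    rintro (⟨W, hW⟩ | ⟨B, hB⟩) (⟨W', hW'⟩ | ⟨B', hB'⟩) hne hv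
    · simp only [Sum.elim_inl, Ne, hzero] at hv
      exact (hv (hint W hW W' hW' fun h => hne (by subst h; rfl))).elim
    · simp only [Sum.elim_inl, Sum.elim_inr] at hv
      rw [mul_indicator_Ici_apply_ne_zero, Ne, hzero, inf_top_eq] at hv
      exact (hv.1 (hdim W hW)).elim
    · exact Nat.succ_pos _
    · simp only [Sum.elim_inr] at hv
      rw [mul_indicator_Ici_apply_ne_zero] at hv
      have hlt : B' < B := lt_of_le_of_ne hv.2 fun h => hne (by subst h; rfl)
      exact Nat.succ_lt_succ (finrank_lt_finrank_of_lt hlt)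

theorem card_add_natCard_le_natCard_finrank_le [Fintype K] [Finite V] {b r s : ℕ} (hb : 0 < b)
    (hord : orderOf (Fintype.card K : R) = b)
    (k : Fin r → ℕ) (μ : Fin s → ℕ) (hkμ : ∀ t t', ¬ k t ≡ μ t' [MOD b])
    (𝓕 : Finset (Submodule K V)) (𝓑 : Set (Submodule K V))
    (hdim : ∀ W ∈ 𝓕, ∃ t, finrank K W ≡ k t [MOD b])
    (hint : ∀ U ∈ 𝓕, ∀ W ∈ 𝓕, U ≠ W → ∃ t, finrank K ↥(U ⊓ W) ≡ μ t [MOD b])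
    (h𝓑 : ∀ B ∈ 𝓑, finrank K B + r ≤ s ∧ ∀ t, ¬ finrank K B ≡ k t [MOD b]) :
    #𝓕 + Nat.card 𝓑 ≤ Nat.card {A : Submodule K V // finrank K A ≤ s} := by
  have hθ (a c : ℕ) : (Fintype.card K : R) ^ a = (Fintype.card K : R) ^ c ↔ a ≡ c [MOD b] := by
    rw [(orderOf_pos_iff.1 (hord ▸ hb)).pow_eq_pow_iff_modEq, hord]
  have hli := linearIndependent_finrankInfProd hθ k μ hkμ 𝓕 𝓑 hdim hint fun B hB => (h𝓑 B hB).2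
  have hmem : ∀ i, Sum.elim (fun W : 𝓕 => finrankInfProd (Fintype.card K : R) μ W.1)
      (fun B : 𝓑 => finrankInfProd (Fintype.card K : R) k ⊤ * (Set.Ici B.1).indicator 1) i
        ∈ iciIndicatorSpan R s := by
    rintro (⟨W, hW⟩ | ⟨B, hB⟩)
    · exact finrankInfProd_mem_iciIndicatorSpan μ W
    · exact iciIndicatorSpan_mono ((add_comm _ _).trans_le (h𝓑 B hB).1)
        (mul_mem_iciIndicatorSpan (finrankInfProd_mem_iciIndicatorSpan k ⊤)
          (iciIndicator_mem_iciIndicatorSpan (d := finrank K B) le_rfl))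
  simpa [Nat.card_sum] using hli.natCard_le_of_mem_iciIndicatorSpan hmem

end RayChaudhuriWilson

theorem sum_range_filter_lt_add (N : ℕ → ℕ) (r s : ℕ) :
    ∑ j ∈ range (s + 1) with s < j + r, N j = ∑ i ∈ range r, if i ≤ s then N (s - i) else 0 := by
  rw [← sum_filter]
  refine sum_nbij' (s - ·) (s - ·) ?_ ?_ ?_ ?_ ?_ <;> intro j hj <;>
    simp only [mem_filter, mem_range] at hj ⊢ <;>
    first | omega | (congr 1; omega)

theorem sum_filter_not_le_sum_filter_lt_add_sum (N : ℕ → ℕ) {b r s : ℕ} (k : Fin r → ℕ)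
    (hkb : ∀ t, k t < b) (hsb : s ≤ b) :
    ∑ j ∈ range (s + 1) with ¬ (j + r ≤ s ∧ ∀ t, ¬ j ≡ k t [MOD b]), N j
      ≤ ∑ j ∈ range (s + 1) with s < j + r, N j + ∑ t with k t + r ≤ s, N (k t) := by
  rw [← sum_filter_add_sum_filter_not _ (fun j => s < j + r), filter_filter, filter_filter]
  have htop : {j ∈ range (s + 1) | ¬ (j + r ≤ s ∧ ∀ t, ¬ j ≡ k t [MOD b]) ∧ s < j + r}
      ⊆ {j ∈ range (s + 1) | s < j + r} :=
    fun _ hj => mem_filter.2 ⟨(mem_filter.1 hj).1, (mem_filter.1 hj).2.2⟩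
  have hlow : {j ∈ range (s + 1) | ¬ (j + r ≤ s ∧ ∀ t, ¬ j ≡ k t [MOD b]) ∧ ¬ s < j + r}
      ⊆ image k {t | k t + r ≤ s} := by
    intro j hj
    simp only [mem_filter, mem_range, not_and, not_forall, not_not, not_lt] at hj
    obtain ⟨-, hP, hjr⟩ := hj
    obtain ⟨t, ht⟩ := hP hjr
    have hjk : j = k t := ht.eq_of_lt_of_lt (by have := t.pos; omega) (hkb t)
    exact mem_image.2 ⟨t, mem_filter.2 ⟨mem_univ t, hjk ▸ hjr⟩, hjk.symm⟩
  exact add_le_add (sum_le_sum_of_subset htop)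
    ((sum_le_sum_of_subset hlow).trans (sum_image_le_of_nonneg fun _ _ => Nat.zero_le _))

theorem generalized_modular_RW_subspaces_unrestricted_general
    {𝔽 V : Type*} [Field 𝔽] [Fintype 𝔽]
    [AddCommGroup V] [Module 𝔽 V] [FiniteDimensional 𝔽 V]
    (q n b r s : ℕ) (hq : Fintype.card 𝔽 = q) (hn : Module.finrank 𝔽 V = n)
    (hr : 0 < r)
    (k : Fin r → ℕ) (μ : Fin s → ℕ)
    (hk : StrictMono k) (hμ : Function.Injective μ)
    (hkb : ∀ t, k t < b) (hμb : ∀ t, μ t < b)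
    (hdisj : ∀ t t', k t ≠ μ t')
    (p : ℕ) (hp : p.Prime) (hord : orderOf (q : ZMod p) = b)
    (𝓕 : Finset (Submodule 𝔽 V))
    (hdim : ∀ W ∈ 𝓕, ∃ t, Module.finrank 𝔽 W ≡ k t [MOD b])
    (hint : ∀ U ∈ 𝓕, ∀ W ∈ 𝓕, U ≠ W →
      ∃ t, Module.finrank 𝔽 ↥(U ⊓ W) ≡ μ t [MOD b]) :
    𝓕.card ≤ (∑ i ∈ Finset.range r, if i ≤ s then qchoose q n (s - i) else 0)
        + ∑ t : Fin r, qchoose q n (k t)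
    ∧ (s < k ⟨0, hr⟩ + r →
        𝓕.card ≤ ∑ i ∈ Finset.range r, if i ≤ s then qchoose q n (s - i) else 0) := by
  classical
  subst hq hn
  have : Finite V := Module.finite_of_finite 𝔽
  have : Fact p.Prime := ⟨hp⟩
  have hsb : s ≤ b := by
    simpa using Fintype.card_le_of_injective (fun t => (⟨μ t, hμb t⟩ : Fin b))
      fun t t' h => hμ (congrArg Fin.val h)
  -- the dimensions of the subspaces `B` that supply the extra functions `g_B`
  set P : ℕ → Prop := fun j => j + r ≤ s ∧ ∀ t, ¬ j ≡ k t [MOD b]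
  have hcard := card_add_natCard_le_natCard_finrank_le (R := ZMod p)
    (Nat.zero_lt_of_lt (hkb ⟨0, hr⟩)) hord k μ
    (fun t t' h => hdisj t t' (h.eq_of_lt_of_lt (hkb t) (hμb t'))) 𝓕
    {B | finrank 𝔽 B ∈ {j ∈ range (s + 1) | P j}} hdim hint
    fun B hB => (mem_filter.1 (Set.mem_ofPred.1 hB)).2
  rw [Set.coe_ofPred, natCard_finrank_mem, natCard_finrank_le] at hcard
  set N := qchoose (Fintype.card 𝔽) (finrank 𝔽 V)
  have h𝓕 : #𝓕 ≤ ∑ j ∈ range (s + 1) with ¬ P j, N j := by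
    have := sum_filter_add_sum_filter_not (range (s + 1)) P N
    omega
  have hbound := h𝓕.trans (sum_filter_not_le_sum_filter_lt_add_sum N k hkb hsb)
  rw [sum_range_filter_lt_add] at hbound
  refine ⟨hbound.trans (add_le_add le_rfl (sum_le_sum_of_subset (filter_subset _ _))), fun h => ?_⟩
  have hnone : ({t | k t + r ≤ s} : Finset (Fin r)) = ∅ :=
    filter_eq_empty_iff.2 fun t _ => by
      have := hk.monotone (show (⟨0, hr⟩ : Fin r) ≤ t from Nat.zero_le _); omega
  rwa [hnone, sum_empty, add_zero] at hbound

theorem generalized_modular_RW_subspaces_unrestricted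
    {𝔽 V : Type*} [Field 𝔽] [Fintype 𝔽]
    [AddCommGroup V] [Module 𝔽 V] [FiniteDimensional 𝔽 V]
    (q n b r s : ℕ) (hq : Fintype.card 𝔽 = q) (hn : Module.finrank 𝔽 V = n)
    (hr : 0 < r) (hs : 0 < s)
    (k : Fin r → ℕ) (μ : Fin s → ℕ)
    (hk : StrictMono k) (hμ : Function.Injective μ)
    (hkb : ∀ t, k t < b) (hμb : ∀ t, μ t < b)
    (hdisj : ∀ t t', k t ≠ μ t')
    (p : ℕ) (hp : p.Prime) (hord : orderOf (q : ZMod p) = b)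
    (𝓕 : Finset (Submodule 𝔽 V))
    (hdim : ∀ W ∈ 𝓕, ∃ t, Module.finrank 𝔽 W ≡ k t [MOD b])
    (hint : ∀ U ∈ 𝓕, ∀ W ∈ 𝓕, U ≠ W →
      ∃ t, Module.finrank 𝔽 ↥(U ⊓ W) ≡ μ t [MOD b]) :
    𝓕.card ≤ (∑ i ∈ Finset.range r, if i ≤ s then qchoose q n (s - i) else 0)
        + ∑ t : Fin r, qchoose q n (k t)
    ∧ (s < k ⟨0, hr⟩ + r →
        𝓕.card ≤ ∑ i ∈ Finset.range r, if i ≤ s then qchoose q n (s - i) else 0) :=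
  generalized_modular_RW_subspaces_unrestricted_general q n b r s hq hn hr k μ hk hμ hkb hμb hdisj p
    hp hord 𝓕 hdim hint
end

section
/- Let b be a prime, Q ≥ 2 an integer, and let N be an m × m integer matrix such that each diagonal entry N_{ii} is divisible by [b]_Q and each off-diagonal entry N_{il} is congruent to [r_3]_Q modulo [b]_Q for a fixed r_3 with 1 ≤ r_3 ≤ b-1 and gcd([r_3]_Q, [b]_Q) = 1. Then det(N) ≡ (±1)·([r_3]_Q)^m·(m-1) (mod [b]_Q), and at least one of N or its top-left (m-1) × (m-1) submatrix has nonzero determinant; consequently rank(N) ≥ m - 1. -/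
open Matrix

theorem one_lt_qint {Q b : ℕ} (hQ : 0 < Q) (hb : 2 ≤ b) : 1 < qint Q b :=
  calc 1 < ∑ i ∈ Finset.range 2, Q ^ i := by simp [Finset.sum_range_succ, hQ]
    _ ≤ qint Q b := Finset.sum_le_sum_of_subset (Finset.range_subset_range.2 hb)

theorem det_of_zero_diag_const_offDiag {R : Type*} [CommRing R] {k : ℕ} (hk : 1 ≤ k) (r : R) :
    (of fun i j : Fin k => if i = j then (0 : R) else r).det
      = (-1) ^ (k - 1) * r ^ k * ((k : R) - 1) := by
  obtain ⟨j, rfl⟩ := Nat.exists_eq_add_of_le hk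
  -- `r • (J - 1)` with the all-ones matrix `J` written as a rank-one product
  have hM : (of fun i l : Fin (1 + j) => if i = l then (0 : R) else r)
      = (-r) • (1 + replicateCol Unit (fun _ : Fin (1 + j) => (-1 : R))
          * replicateRow Unit (fun _ : Fin (1 + j) => (1 : R))) := by
    ext i l
    by_cases h : i = l <;> simp [h, one_apply, mul_apply, replicateCol, replicateRow]
  rw [hM, det_smul, det_one_add_replicateCol_mul_replicateRow]
  simp only [dotProduct, Finset.sum_const, Finset.card_univ, Fintype.card_fin,
    nsmul_eq_mul, mul_neg, mul_one, Nat.add_sub_cancel_left]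
  rw [neg_pow]
  push_cast
  ring

section ModularDet

variable {n : ℕ} {r : ℤ} {k : ℕ} {M : Matrix (Fin k) (Fin k) ℤ}

theorem det_modEq_of_diag_dvd_of_offDiag_modEq (hk : 1 ≤ k) (hdiag : ∀ i, (n : ℤ) ∣ M i i)
    (hoff : ∀ i l, i ≠ l → M i l ≡ r [ZMOD n]) :
    M.det ≡ (-1) ^ (k - 1) * r ^ k * ((k : ℤ) - 1) [ZMOD n] := by
  have hred : M.map (Int.cast : ℤ → ZMod n)
      = of fun i j : Fin k => if i = j then (0 : ZMod n) else (r : ZMod n) := by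
    ext i l
    by_cases h : i = l
    · subst h
      simpa [ZMod.intCast_zmod_eq_zero_iff_dvd] using hdiag i
    · simpa [h, ZMod.intCast_eq_intCast_iff] using hoff i l h
  rw [← ZMod.intCast_eq_intCast_iff, Int.cast_det, hred, det_of_zero_diag_const_offDiag hk]
  push_cast
  ring

theorem dvd_sub_one_of_det_eq_zero (hcop : IsCoprime r n) (hk : 1 ≤ k)
    (hdiag : ∀ i, (n : ℤ) ∣ M i i) (hoff : ∀ i l, i ≠ l → M i l ≡ r [ZMOD n])
    (hdet : M.det = 0) : (n : ℤ) ∣ (k : ℤ) - 1 := by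
  have h := det_modEq_of_diag_dvd_of_offDiag_modEq hk hdiag hoff
  rw [hdet] at h
  have hdvd : (n : ℤ) ∣ (-1) ^ (k - 1) * (r ^ k * ((k : ℤ) - 1)) := by
    rw [← mul_assoc]
    exact Int.modEq_zero_iff_dvd.mp h.symm
  rw [((isUnit_neg_one (α := ℤ)).pow _).dvd_mul_left] at hdvd
  exact hcop.pow_left.symm.dvd_of_dvd_mul_left hdvd

theorem det_ne_zero_or_det_submatrix_castLE_ne_zero (hn : 1 < n) (hcop : IsCoprime r n)
    (hk : 1 ≤ k) (hdiag : ∀ i, (n : ℤ) ∣ M i i) (hoff : ∀ i l, i ≠ l → M i l ≡ r [ZMOD n]) :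
    M.det ≠ 0 ∨
      (M.submatrix (Fin.castLE (Nat.sub_le k 1)) (Fin.castLE (Nat.sub_le k 1))).det ≠ 0 := by
  by_contra! ⟨hdet, hsub⟩
  obtain hk1 | hk2 := Nat.lt_or_ge k 2
  · have : IsEmpty (Fin (k - 1)) := by rw [show k - 1 = 0 by omega]; infer_instance
    simp at hsub
  have hk_sub_one := dvd_sub_one_of_det_eq_zero hcop hk hdiag hoff hdet
  have hk_sub_two := dvd_sub_one_of_det_eq_zero hcop (k := k - 1) (by omega)
    (fun i => hdiag _) (fun i l hil => hoff _ _ ((Fin.castLE_injective _).ne hil)) hsub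
  rw [Nat.cast_sub (by omega)] at hk_sub_two
  have hone : (n : ℤ) ∣ 1 := by simpa using dvd_sub hk_sub_one hk_sub_two
  have := Int.le_of_dvd one_pos hone
  omega

end ModularDet

theorem Matrix.card_le_rank_of_det_submatrix_ne_zero {R : Type*} [CommRing R] [IsDomain R]
    {m n ι : Type*} [Fintype n] [Fintype ι] [DecidableEq ι] (A : Matrix m n R)
    (f : ι → m) (g : ι → n) (h : (A.submatrix f g).det ≠ 0) : Fintype.card ι ≤ A.rank :=
  rank_of_det_ne_zero h ▸ rank_submatrix_le A f g

theorem det_mod_qint_and_rank_general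
    (b Q r3 m : ℕ) (hb : b.Prime) (hQ : 2 ≤ Q) (hm : 1 ≤ m)
    (hgcd : Nat.gcd (qint Q r3) (qint Q b) = 1)
    (N : Matrix (Fin m) (Fin m) ℤ)
    (hdiag : ∀ i, (qint Q b : ℤ) ∣ N i i)
    (hoff : ∀ i l, i ≠ l → N i l ≡ (qint Q r3 : ℤ) [ZMOD (qint Q b : ℤ)]) :
    N.det ≡ (-1) ^ (m - 1) * (qint Q r3 : ℤ) ^ m * ((m : ℤ) - 1) [ZMOD (qint Q b : ℤ)]
    ∧ (N.det ≠ 0 ∨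
        (N.submatrix (Fin.castLE (Nat.sub_le m 1)) (Fin.castLE (Nat.sub_le m 1))).det ≠ 0)
    ∧ (m - 1 : ℕ) ≤ (N.map (Int.cast : ℤ → ℚ)).rank := by
  have hn : 1 < qint Q b := one_lt_qint (by omega) hb.two_le
  have hcop : IsCoprime (qint Q r3 : ℤ) (qint Q b) :=
    Int.isCoprime_iff_gcd_eq_one.2 (by simpa using hgcd)
  have hnonsing := det_ne_zero_or_det_submatrix_castLE_ne_zero hn hcop hm hdiag hoff
  refine ⟨det_modEq_of_diag_dvd_of_offDiag_modEq hm hdiag hoff, hnonsing, ?_⟩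
  rcases hnonsing with hdet | hsub
  · rw [rank_of_det_ne_zero (by rwa [← Int.cast_det, Int.cast_ne_zero]), Fintype.card_fin]
    omega
  · simpa using (N.map (Int.cast : ℤ → ℚ)).card_le_rank_of_det_submatrix_ne_zero
      (Fin.castLE (Nat.sub_le m 1)) (Fin.castLE (Nat.sub_le m 1))
      (by rw [submatrix_map, ← Int.cast_det]; exact_mod_cast hsub)

theorem det_mod_qint_and_rank
    (b Q r3 m : ℕ) (hb : b.Prime) (hQ : 2 ≤ Q) (hm : 1 ≤ m)
    (hr3 : 1 ≤ r3) (hr3' : r3 ≤ b - 1)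
    (hgcd : Nat.gcd (qint Q r3) (qint Q b) = 1)
    (N : Matrix (Fin m) (Fin m) ℤ)
    (hdiag : ∀ i, (qint Q b : ℤ) ∣ N i i)
    (hoff : ∀ i l, i ≠ l → N i l ≡ (qint Q r3 : ℤ) [ZMOD (qint Q b : ℤ)]) :
    N.det ≡ (-1) ^ (m - 1) * (qint Q r3 : ℤ) ^ m * ((m : ℤ) - 1) [ZMOD (qint Q b : ℤ)]
    ∧ (N.det ≠ 0 ∨
        (N.submatrix (Fin.castLE (Nat.sub_le m 1)) (Fin.castLE (Nat.sub_le m 1))).det ≠ 0)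
    ∧ (m - 1 : ℕ) ≤ (N.map (Int.cast : ℤ → ℚ)).rank :=
  det_mod_qint_and_rank_general b Q r3 m hb hQ hm hgcd N hdiag hoff
end
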